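/- On the Sierpinski gasket, the discrete energies E^{(m)}(u,u) = Σ_{x,y∈V_m, |x−y|=2^{-m}} (1/2)(5/3)^m [u(x)−u(y)]² are nondecreasing in m for any function u on V_*; equivalently, in the level-0 case: for any u: V₀ → ℝ, every extension ũ of u to V₁ satisfies E^{(1)}(ũ, ũ) ≥ E^{(0)}(u, u), with equality exactly for the harmonic extension. -/
import Mathlib


/-- Level-0/level-1 energy comparison on the Sierpinski gasket: for boundary
values u on V₀ and midpoint values w, the level-1 energy (with renormalization
factor 5/3) dominates the level-0 energy, with equality exactly for the
harmonic extension (midpoint value (2u(pᵢ)+2u(pⱼ)+u(p_k))/5). -/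
theorem gasket_energy_monotone (u w : Fin 3 → ℝ) :
    let E0 : ℝ := (1/2) * ∑ x : Fin 3, ∑ y ∈ Finset.univ.erase x, (u x - u y) ^ 2
    let E1 : ℝ := (5/3) *
      ((∑ i : Fin 3, ∑ j ∈ Finset.univ.erase i, (u i - w j) ^ 2) +
        (1/2) * ∑ j : Fin 3, ∑ k ∈ Finset.univ.erase j, (w j - w k) ^ 2)
    E0 ≤ E1 ∧
      (E1 = E0 ↔ ∀ k : Fin 3, w k = (u k + 2 * ∑ i ∈ Finset.univ.erase k, u i) / 5) := by
  intro E0 E1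
  have h01 : (Finset.univ.erase (0 : Fin 3)) = {1, 2} := by decide
  have h11 : (Finset.univ.erase (1 : Fin 3)) = {0, 2} := by decide
  have h21 : (Finset.univ.erase (2 : Fin 3)) = {0, 1} := by decide
  have p12 : ∀ f : Fin 3 → ℝ, ∑ i ∈ ({1, 2} : Finset (Fin 3)), f i = f 1 + f 2 :=
    fun f => Finset.sum_pair (by decide)
  have p02 : ∀ f : Fin 3 → ℝ, ∑ i ∈ ({0, 2} : Finset (Fin 3)), f i = f 0 + f 2 :=
    fun f => Finset.sum_pair (by decide)
  have p01 : ∀ f : Fin 3 → ℝ, ∑ i ∈ ({0, 1} : Finset (Fin 3)), f i = f 0 + f 1 :=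
    fun f => Finset.sum_pair (by decide)
  have hE0 : E0 = (1/2) * (((u 0 - u 1)^2 + (u 0 - u 2)^2) + ((u 1 - u 0)^2 + (u 1 - u 2)^2)
      + ((u 2 - u 0)^2 + (u 2 - u 1)^2)) := by
    simp only [E0, Fin.sum_univ_three, h01, h11, h21, p12, p02, p01]
  have hE1 : E1 = (5/3) * ((((u 0 - w 1)^2 + (u 0 - w 2)^2) + ((u 1 - w 0)^2 + (u 1 - w 2)^2)
      + ((u 2 - w 0)^2 + (u 2 - w 1)^2)) +
      (1/2) * (((w 0 - w 1)^2 + (w 0 - w 2)^2) + ((w 1 - w 0)^2 + (w 1 - w 2)^2)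
      + ((w 2 - w 0)^2 + (w 2 - w 1)^2))) := by
    simp only [E1, Fin.sum_univ_three, h01, h11, h21, p12, p02, p01]
  obtain ⟨a, b, c, ha, hb, hc⟩ : ∃ a b c : ℝ, u 0 = a ∧ u 1 = b ∧ u 2 = c := ⟨_, _, _, rfl, rfl, rfl⟩
  obtain ⟨x, y, z, hx, hy, hz⟩ : ∃ x y z : ℝ, w 0 = x ∧ w 1 = y ∧ w 2 = z := ⟨_, _, _, rfl, rfl, rfl⟩
  rw [ha, hb, hc] at hE0
  rw [ha, hb, hc, hx, hy, hz] at hE1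
  have key : E1 - E0 = (5/3) *
      (((x - (a + 2*(b + c))/5) - (y - (b + 2*(a + c))/5))^2
      + ((y - (b + 2*(a + c))/5) - (z - (c + 2*(a + b))/5))^2
      + ((x - (a + 2*(b + c))/5) - (z - (c + 2*(a + b))/5))^2
      + 2 * ((x - (a + 2*(b + c))/5)^2 + (y - (b + 2*(a + c))/5)^2
          + (z - (c + 2*(a + b))/5)^2)) := by
    rw [hE0, hE1]; ring
  have keynn : (0:ℝ) ≤ E1 - E0 := by
    rw [key]; positivity
  constructor
  · linarith
  · constructor
    · intro h
      have hz0 : E1 - E0 = 0 := by rw [h]; ring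
      rw [key] at hz0
      have s0 : (x - (a + 2*(b + c))/5)^2 = 0 := by
        linarith [sq_nonneg ((x - (a + 2*(b + c))/5) - (y - (b + 2*(a + c))/5)),
          sq_nonneg ((y - (b + 2*(a + c))/5) - (z - (c + 2*(a + b))/5)),
          sq_nonneg ((x - (a + 2*(b + c))/5) - (z - (c + 2*(a + b))/5)),
          sq_nonneg (x - (a + 2*(b + c))/5), sq_nonneg (y - (b + 2*(a + c))/5),
          sq_nonneg (z - (c + 2*(a + b))/5)]
      have s1 : (y - (b + 2*(a + c))/5)^2 = 0 := by
        linarith [sq_nonneg ((x - (a + 2*(b + c))/5) - (y - (b + 2*(a + c))/5)),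
          sq_nonneg ((y - (b + 2*(a + c))/5) - (z - (c + 2*(a + b))/5)),
          sq_nonneg ((x - (a + 2*(b + c))/5) - (z - (c + 2*(a + b))/5)),
          sq_nonneg (x - (a + 2*(b + c))/5), sq_nonneg (y - (b + 2*(a + c))/5),
          sq_nonneg (z - (c + 2*(a + b))/5)]
      have s2 : (z - (c + 2*(a + b))/5)^2 = 0 := by
        linarith [sq_nonneg ((x - (a + 2*(b + c))/5) - (y - (b + 2*(a + c))/5)),
          sq_nonneg ((y - (b + 2*(a + c))/5) - (z - (c + 2*(a + b))/5)),
          sq_nonneg ((x - (a + 2*(b + c))/5) - (z - (c + 2*(a + b))/5)),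
          sq_nonneg (x - (a + 2*(b + c))/5), sq_nonneg (y - (b + 2*(a + c))/5),
          sq_nonneg (z - (c + 2*(a + b))/5)]
      have z0 : x - (a + 2*(b + c))/5 = 0 := by
        have := sq_eq_zero_iff.mp s0; exact this
      have z1 : y - (b + 2*(a + c))/5 = 0 := by
        have := sq_eq_zero_iff.mp s1; exact this
      have z2 : z - (c + 2*(a + b))/5 = 0 := by
        have := sq_eq_zero_iff.mp s2; exact this
      clear key keynn hz0 h s0 s1 s2 hE0 hE1
      intro k
      fin_cases k <;>
        simp only [Fin.zero_eta, Fin.mk_one, Fin.reduceFinMk]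
      · rw [h01, p12, ha, hb, hc, hx]; linarith
      · rw [h11, p02, ha, hb, hc, hy]; linarith
      · rw [h21, p01, ha, hb, hc, hz]; linarith
    · intro h
      have e0 := h 0; have e1 := h 1; have e2 := h 2
      rw [h01, p12, ha, hb, hc, hx] at e0
      rw [h11, p02, ha, hb, hc, hy] at e1
      rw [h21, p01, ha, hb, hc, hz] at e2
      have : E1 - E0 = 0 := by rw [key, e0, e1, e2]; ring
      linarith
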